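/- The R-module homomorphism φ : R[G] → M_R determined by g ↦ {g·0, g·∞} = {gσ⟨T⟩, g⟨T⟩} is surjective, and its kernel is R[G]N_σ + R[G]N_τ. -/

import Mathlib

noncomputable section

variable (R : Type*) [CommRing R] {G : Type*} [Group G]

/-- `N_g = 1 + g + ⋯ + g^(m-1) ∈ R[G]` for an element `g` of finite order `m`. -/
def Nelt (g : G) : MonoidAlgebra R G :=
  ∑ i ∈ Finset.range (orderOf g), MonoidAlgebra.of R G (g ^ i)

/-- The cusp set `G(∞)`, identified with the coset space `G/⟨T⟩` via `g∞ ↦ g⟨T⟩`. -/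
abbrev CuspSet (T : G) := G ⧸ Subgroup.zpowers T

/-- The submodule of relations defining the modular symbols module: it is generated by the
elements `{α,α}` and `{α,β} + {β,γ} + {γ,α}` where `{α,β}` denotes the basis element
`single (α,β) 1` of the free `R`-module on pairs of cusps. -/
def msRel (T : G) : Submodule R ((CuspSet T × CuspSet T) →₀ R) :=
  Submodule.span R
    ({x | ∃ α, x = Finsupp.single (α, α) (1 : R)} ∪
      {x | ∃ α β γ, x = Finsupp.single (α, β) (1 : R) + Finsupp.single (β, γ) (1 : R) +
        Finsupp.single (γ, α) (1 : R)})

/-- The modular symbols module `M_R`: the free `R`-module on the symbols `{α,β}`,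
`α, β ∈ G/⟨T⟩`, modulo the relations `{α,α}` and `{α,β} + {β,γ} + {γ,α}`. -/
abbrev MSymb (T : G) := ((CuspSet T × CuspSet T) →₀ R) ⧸ msRel R T

/-- The `R`-module homomorphism `φ : R[G] → M_R` determined by
`g ↦ {g·0, g·∞} = {gσ⟨T⟩, g⟨T⟩}`. -/
def maninMap (σ T : G) : MonoidAlgebra R G →ₗ[R] MSymb R T :=
  (Finsupp.linearCombination R fun g : G =>
    Submodule.Quotient.mk
      (Finsupp.single ((QuotientGroup.mk (g * σ) : CuspSet T),
        (QuotientGroup.mk g : CuspSet T)) (1 : R))) ∘ₗ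
    (MonoidAlgebra.coeffLinearEquiv R).toLinearMap

/-! The ideal lies in the kernel: `σ² = 1` makes `φ(gN_σ) = {gσ, g} + {g, gσ}`, and since
`τ^(i+1) σ = τ^i T` the terms of `φ(gN_τ)` form the closed chain `{g, gτ}, …, {gτ^(m-1), g}`.

Surjectivity: the set of `g` with `{hg, h} ∈ im φ` for all `h` contains `σ` and `τ` and is a
subgroup by the three-term relation, so it is all of `G`; and `{a, b} = {b (b⁻¹a), b}`.

Kernel ⊆ ideal: in `Q = R[G]/(R[G]N_σ + R[G]N_τ)` we have `N_σ[1] = 0 = N_τ[τ]`, so, `G` being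
a free product, there is a 1-cocycle `c : G → Q` with `c σ = [1]` and `c τ = -[τ]`. Then
`c T = 0`, so `c` descends to the cusps, and `{α, β} ↦ c α - c β` sends `φ(g)` to
`c(gσ) - c(g) = g • c σ = [g]`. -/

open Finset MonoidAlgebra groupCohomology

theorem Finset.sum_range_orderOf_pow_succ {M A : Type*} [Monoid M] [AddCommMonoid A]
    (g : M) (f : M → A) :
    ∑ i ∈ range (orderOf g), f (g ^ (i + 1)) = ∑ i ∈ range (orderOf g), f (g ^ i) := by
  rcases (orderOf g).eq_zero_or_pos with h | h
  · simp [h]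
  · obtain ⟨m, hm⟩ := Nat.exists_eq_add_of_lt h
    rw [zero_add] at hm
    rw [hm, sum_range_succ, sum_range_succ', ← hm, pow_orderOf_eq_one, pow_zero]

theorem Nelt_mul_of (g : G) : Nelt R g * of R G g = Nelt R g := by
  simp only [Nelt, sum_mul, ← map_mul, ← pow_succ]
  exact sum_range_orderOf_pow_succ g (of R G)

theorem Subgroup.closure_pair_eq_top_of_surjective_coprodLift {σ τ : G}
    (h : Function.Surjective
      (Monoid.Coprod.lift (Subgroup.zpowers σ).subtype (Subgroup.zpowers τ).subtype)) :
    Subgroup.closure {σ, τ} = ⊤ := by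
  rw [← MonoidHom.range_eq_top.2 h, Monoid.Coprod.range_lift, Subgroup.range_subtype,
    Subgroup.range_subtype, Subgroup.zpowers_eq_closure, Subgroup.zpowers_eq_closure,
    ← Subgroup.closure_union, Set.singleton_union]

namespace MSymb

variable {T : G}

def sym (α β : CuspSet T) : MSymb R T := Submodule.Quotient.mk (Finsupp.single (α, β) 1)

theorem sym_self (α : CuspSet T) : sym R α α = 0 :=
  (Submodule.Quotient.mk_eq_zero _).2 (Submodule.subset_span (Or.inl ⟨α, rfl⟩))

theorem sym_add_sym_add_sym (α β γ : CuspSet T) :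
    sym R α β + sym R β γ + sym R γ α = 0 :=
  (Submodule.Quotient.mk_eq_zero _).2 (Submodule.subset_span (Or.inr ⟨α, β, γ, rfl⟩))

theorem sym_swap (α β : CuspSet T) : sym R β α = -sym R α β := by
  have h := sym_add_sym_add_sym R α β α
  rw [sym_self, add_zero] at h
  exact eq_neg_of_add_eq_zero_right h

theorem sym_add_sym (α β γ : CuspSet T) : sym R α β + sym R β γ = sym R α γ := by
  rw [← add_neg_eq_zero, ← sym_swap]
  exact sym_add_sym_add_sym R α β γ

theorem sum_range_sym (a : ℕ → CuspSet T) (m : ℕ) :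
    ∑ i ∈ range m, sym R (a i) (a (i + 1)) = sym R (a 0) (a m) := by
  induction m with
  | zero => simp [sym_self]
  | succ m ih => rw [sum_range_succ, ih, sym_add_sym]

theorem mk_single (α β : CuspSet T) (r : R) :
    (Submodule.Quotient.mk (Finsupp.single (α, β) r) : MSymb R T) = r • sym R α β := by
  rw [sym, ← Submodule.Quotient.mk_smul, Finsupp.smul_single_one]

theorem eq_top_of_sym_mem {p : Submodule R (MSymb R T)} (h : ∀ α β, sym R α β ∈ p) :
    p = ⊤ := by
  refine Submodule.eq_top_iff'.2 fun x => ?_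
  obtain ⟨x, rfl⟩ := Submodule.Quotient.mk_surjective _ x
  induction x using Finsupp.induction_linear with
  | zero => exact p.zero_mem
  | add x y hx hy => exact p.add_mem hx hy
  | single αβ r => exact mk_single R αβ.1 αβ.2 r ▸ p.smul_mem r (h _ _)

variable {V : Type*} [AddCommGroup V] [Module R V]

def lift (f : CuspSet T → V) : MSymb R T →ₗ[R] V :=
  (msRel R T).liftQ (Finsupp.linearCombination R fun αβ => f αβ.1 - f αβ.2) <| by
    rw [msRel, Submodule.span_le]
    rintro _ (⟨α, rfl⟩ | ⟨α, β, γ, rfl⟩) <;>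
      simp only [SetLike.mem_coe, LinearMap.mem_ker, map_add, Finsupp.linearCombination_single,
        one_smul]
    · exact sub_self _
    · abel

theorem lift_sym (f : CuspSet T → V) (α β : CuspSet T) : lift R f (sym R α β) = f α - f β := by
  rw [lift, sym, Submodule.liftQ_apply, Finsupp.linearCombination_single, one_smul]

end MSymb

open MSymb

theorem maninMap_single (σ T g : G) (r : R) :
    maninMap R σ T (single g r) = r • sym R (↑(g * σ) : CuspSet T) ↑g := by
  simp [maninMap, sym]

section ManinMap

variable {σ τ T : G}

theorem coe_mul_mul_eq_coe (hT : T = τ * σ) (g : G) : ((g * τ * σ : G) : CuspSet T) = g := by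
  rw [mul_assoc, ← hT]
  exact QuotientGroup.mk_mul_of_mem g (Subgroup.mem_zpowers T)

theorem sym_mul_mem_range_maninMap (hgen : Subgroup.closure {σ, τ} = ⊤) (hT : T = τ * σ)
    (g h : G) : sym R (↑(h * g) : CuspSet T) ↑h ∈ LinearMap.range (maninMap R σ T) := by
  induction hgen ▸ Subgroup.mem_top g using Subgroup.closure_induction generalizing h with
  | mem x hx =>
    rcases hx with rfl | rfl
    · exact ⟨single h 1, by rw [maninMap_single, one_smul]⟩
    · refine ⟨-single (h * x) 1, ?_⟩
      rw [map_neg, maninMap_single, one_smul, coe_mul_mul_eq_coe hT, sym_swap, neg_neg]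
  | one => simp [sym_self]
  | mul x y _ _ hx hy =>
    rw [← sym_add_sym R _ (↑(h * x) : CuspSet T), ← mul_assoc]
    exact add_mem (hy (h * x)) (hx h)
  | inv x _ hx =>
    rw [sym_swap]
    simpa using neg_mem (hx (h * x⁻¹))

theorem maninMap_surjective (hgen : Subgroup.closure {σ, τ} = ⊤) (hT : T = τ * σ) :
    Function.Surjective (maninMap R σ T) := by
  refine LinearMap.range_eq_top.1 (eq_top_of_sym_mem R fun α β => ?_)
  induction α using QuotientGroup.induction_on with | H a =>
  induction β using QuotientGroup.induction_on with | H b =>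
  simpa using sym_mul_mem_range_maninMap R hgen hT (b⁻¹ * a) b

theorem maninMap_single_mul_Nelt (g h : G) (r : R) :
    maninMap R σ T (single g r * Nelt R h) =
      r • ∑ i ∈ range (orderOf h), sym R (↑(g * h ^ i * σ) : CuspSet T) ↑(g * h ^ i) := by
  simp only [Nelt, mul_sum, of_apply, single_mul_single, mul_one, map_sum, maninMap_single,
    smul_sum]

theorem range_mulRight_Nelt_le_ker_maninMap {h : G}
    (hsum : ∀ g : G,
      ∑ i ∈ range (orderOf h), sym R (↑(g * h ^ i * σ) : CuspSet T) ↑(g * h ^ i) = 0) :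
    LinearMap.range (LinearMap.mulRight R (Nelt R h)) ≤ LinearMap.ker (maninMap R σ T) := by
  rintro _ ⟨x, rfl⟩
  induction x using MonoidAlgebra.induction_linear with
  | zero => simp
  | add x y hx hy => simpa [add_mul] using add_mem hx hy
  | single g r => simp [maninMap_single_mul_Nelt, hsum]

theorem range_mulRight_Nelt_le_ker_maninMap_of_orderOf_eq_two (hσ : orderOf σ = 2) :
    LinearMap.range (LinearMap.mulRight R (Nelt R σ)) ≤ LinearMap.ker (maninMap R σ T) := by
  refine range_mulRight_Nelt_le_ker_maninMap R fun g => ?_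
  have hσσ : g * σ * σ = g := by rw [mul_assoc, ← sq, ← hσ, pow_orderOf_eq_one, mul_one]
  rw [hσ, sum_range_succ, sum_range_one, pow_zero, pow_one, mul_one, hσσ, sym_swap,
    neg_add_cancel]

theorem range_mulRight_Nelt_le_ker_maninMap_of_eq_mul (hT : T = τ * σ) :
    LinearMap.range (LinearMap.mulRight R (Nelt R τ)) ≤ LinearMap.ker (maninMap R σ T) := by
  refine range_mulRight_Nelt_le_ker_maninMap R fun g => ?_
  rw [← sum_range_orderOf_pow_succ τ fun t => sym R (↑(g * t * σ) : CuspSet T) ↑(g * t)]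
  have hchain (i : ℕ) : ((g * τ ^ (i + 1) * σ : G) : CuspSet T) = ↑(g * τ ^ i) := by
    rw [pow_succ, ← mul_assoc, coe_mul_mul_eq_coe hT]
  simp only [hchain]
  rw [sum_range_sym R (fun i => (↑(g * τ ^ i) : CuspSet T)), pow_orderOf_eq_one, pow_zero,
    sym_self]

end ManinMap

section Cocycle

variable {H : Type*} [Group H]

theorem ker_zpowersHom_le {g : G} {h : H} (hh : h ^ orderOf g = 1) :
    (zpowersHom G g).ker ≤ (zpowersHom H h).ker := fun k hk => by
  simp only [MonoidHom.mem_ker, zpowersHom_apply, ← orderOf_dvd_iff_zpow_eq_one] at hk ⊢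
  exact (Int.natCast_dvd_natCast.2 (orderOf_dvd_of_pow_eq_one hh)).trans hk

def Subgroup.zpowersLift (g : G) (h : H) (hh : h ^ orderOf g = 1) : Subgroup.zpowers g →* H :=
  (zpowersHom G g).rangeRestrict.liftOfRightInverse _
    (Function.rightInverse_surjInv (zpowersHom G g).rangeRestrict_surjective)
    ⟨zpowersHom H h, (zpowersHom G g).ker_rangeRestrict ▸ ker_zpowersHom_le hh⟩

theorem Subgroup.zpowersLift_apply_self (g : G) (h : H) (hh : h ^ orderOf g = 1) :
    Subgroup.zpowersLift g h hh ⟨g, Subgroup.mem_zpowers g⟩ = h := by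
  have hgen : (zpowersHom G g).rangeRestrict (.ofAdd 1) = ⟨g, Subgroup.mem_zpowers g⟩ :=
    Subtype.ext (by simp)
  exact (congrArg (zpowersLift g h hh) hgen).symm.trans
    (((zpowersHom G g).rangeRestrict.liftOfRightInverse_comp_apply _ _ _ _).trans (by simp))

variable {A : Type*} [AddCommGroup A] [DistribMulAction G A]

def DistribMulAction.toMulAutMultiplicative : G →* MulAut (Multiplicative A) :=
  (MulAutMultiplicative A).symm.toMonoidHom.comp (DistribMulAction.toAddAut G A)

theorem SemidirectProduct.mk_ofAdd_pow (a : A) (g : G) (k : ℕ) :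
    (⟨.ofAdd a, g⟩ : Multiplicative A ⋊[DistribMulAction.toMulAutMultiplicative] G) ^ k =
      ⟨.ofAdd (∑ i ∈ range k, g ^ i • a), g ^ k⟩ := by
  induction k with
  | zero => rw [pow_zero, sum_range_zero, pow_zero]; rfl
  | succ k ih =>
    rw [pow_succ, ih]
    ext
    · rw [SemidirectProduct.mul_left, sum_range_succ]
      rfl
    · rw [SemidirectProduct.mul_right, pow_succ]

theorem exists_isCocycle₁_of_bijective_coprodLift {σ τ : G}
    (hfree : Function.Bijective
      (Monoid.Coprod.lift (Subgroup.zpowers σ).subtype (Subgroup.zpowers τ).subtype))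
    (a b : A) (ha : ∑ i ∈ range (orderOf σ), σ ^ i • a = 0)
    (hb : ∑ i ∈ range (orderOf τ), τ ^ i • b = 0) :
    ∃ c : G → A, IsCocycle₁ c ∧ c σ = a ∧ c τ = b := by
  -- A cocycle `c` is the same as a section `g ↦ (c g, g)` of `A ⋊ G → G`.
  let s : Multiplicative A ⋊[DistribMulAction.toMulAutMultiplicative] G := ⟨.ofAdd a, σ⟩
  let t : Multiplicative A ⋊[DistribMulAction.toMulAutMultiplicative] G := ⟨.ofAdd b, τ⟩
  have hs : s ^ orderOf σ = 1 := by
    rw [SemidirectProduct.mk_ofAdd_pow, ha, pow_orderOf_eq_one]; rfl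
  have ht : t ^ orderOf τ = 1 := by
    rw [SemidirectProduct.mk_ofAdd_pow, hb, pow_orderOf_eq_one]; rfl
  let e := MulEquiv.ofBijective _ hfree
  let F := (Monoid.Coprod.lift (Subgroup.zpowersLift σ s hs) (Subgroup.zpowersLift τ t ht)).comp
    e.symm.toMonoidHom
  have hFσ : F σ = s := by
    have : e.symm σ = .inl ⟨σ, Subgroup.mem_zpowers σ⟩ := e.symm_apply_eq.2 rfl
    simp [F, this, Subgroup.zpowersLift_apply_self]
  have hFτ : F τ = t := by
    have : e.symm τ = .inr ⟨τ, Subgroup.mem_zpowers τ⟩ := e.symm_apply_eq.2 rfl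
    simp [F, this, Subgroup.zpowersLift_apply_self]
  have hright : SemidirectProduct.rightHom.comp F = MonoidHom.id G :=
    MonoidHom.eq_of_eqOn_dense (Subgroup.closure_pair_eq_top_of_surjective_coprodLift hfree.2)
      (by rintro _ (rfl | rfl) <;> simp [hFσ, hFτ, s, t])
  refine ⟨fun g => (F g).left.toAdd, fun g h => ?_, by simp [hFσ, s], by simp [hFτ, t]⟩
  have hg : (F g).right = g := DFunLike.congr_fun hright g
  show (F (g * h)).left.toAdd = _
  rw [map_mul, SemidirectProduct.mul_left, hg, toAdd_mul, add_comm]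
  rfl

end Cocycle

namespace groupCohomology.IsCocycle₁

variable {A : Type*} [AddCommGroup A] [DistribMulAction G A] {c : G → A} {T : G}

theorem map_mul_zpow (hc : IsCocycle₁ c) (hT : c T = 0) (g : G) (k : ℤ) :
    c (g * T ^ k) = c g := by
  have hmul (x : G) : c (x * T) = c x := by rw [hc, hT, smul_zero, zero_add]
  induction k using Int.induction_on with
  | zero => rw [zpow_zero, mul_one]
  | succ k ih => rw [zpow_add_one, ← mul_assoc, hmul, ih]
  | pred k ih => rw [← ih, ← hmul, mul_assoc, ← zpow_add_one, sub_add_cancel]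

theorem exists_factor_quotient_zpowers (hc : IsCocycle₁ c) (hT : c T = 0) :
    ∃ f : G ⧸ Subgroup.zpowers T → A, ∀ g : G, f g = c g := by
  refine ⟨fun α => Quotient.liftOn' α c fun a b hab => ?_, fun g => rfl⟩
  obtain ⟨k, hk⟩ := Subgroup.mem_zpowers_iff.1 (QuotientGroup.leftRel_apply.1 hab)
  rw [← mul_inv_cancel_left a b, ← hk, hc.map_mul_zpow hT]

end groupCohomology.IsCocycle₁

section Kernel

instance (I : Submodule (MonoidAlgebra R G) (MonoidAlgebra R G)) :
    DistribMulAction G (MonoidAlgebra R G ⧸ I) :=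
  DistribMulAction.compHom _ (of R G)

variable {σ τ T : G}

theorem Submodule.Quotient.smul_mk_of {I : Submodule (MonoidAlgebra R G) (MonoidAlgebra R G)}
    (g : G) (x : MonoidAlgebra R G) :
    g • (Submodule.Quotient.mk x : MonoidAlgebra R G ⧸ I) =
      Submodule.Quotient.mk (of R G g * x) := rfl

theorem sum_smul_mk_eq_mk_Nelt_mul {I : Submodule (MonoidAlgebra R G) (MonoidAlgebra R G)}
    (g : G) (x : MonoidAlgebra R G) :
    ∑ i ∈ range (orderOf g), g ^ i • (Submodule.Quotient.mk x : MonoidAlgebra R G ⧸ I) =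
      Submodule.Quotient.mk (Nelt R g * x) := by
  rw [Nelt, sum_mul]
  exact (map_sum I.mkQ _ _).symm

theorem exists_isCocycle₁_quotient_span_Nelt (hfree : Function.Bijective
      (Monoid.Coprod.lift (Subgroup.zpowers σ).subtype (Subgroup.zpowers τ).subtype))
    (hT : T = τ * σ) :
    ∃ c : G → MonoidAlgebra R G ⧸ Submodule.span (MonoidAlgebra R G) {Nelt R σ, Nelt R τ},
      IsCocycle₁ c ∧ c σ = Submodule.Quotient.mk 1 ∧ c T = 0 := by
  have hNσ : Nelt R σ ∈ Submodule.span (MonoidAlgebra R G) {Nelt R σ, Nelt R τ} :=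
    Submodule.subset_span (Set.mem_insert _ _)
  have hNτ : Nelt R τ ∈ Submodule.span (MonoidAlgebra R G) {Nelt R σ, Nelt R τ} :=
    Submodule.subset_span (Set.mem_insert_of_mem _ rfl)
  obtain ⟨c, hc, hcσ, hcτ⟩ := exists_isCocycle₁_of_bijective_coprodLift hfree
    (Submodule.Quotient.mk 1) (-Submodule.Quotient.mk (of R G τ))
    (by rwa [sum_smul_mk_eq_mk_Nelt_mul, mul_one, Submodule.Quotient.mk_eq_zero])
    (by simpa only [smul_neg, sum_neg_distrib, neg_eq_zero, sum_smul_mk_eq_mk_Nelt_mul,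
      Nelt_mul_of, Submodule.Quotient.mk_eq_zero] using hNτ)
  refine ⟨c, hc, hcσ, ?_⟩
  rw [hT, hc, hcσ, hcτ, Submodule.Quotient.smul_mk_of, mul_one, add_neg_cancel]

theorem ker_maninMap_le (hfree : Function.Bijective
      (Monoid.Coprod.lift (Subgroup.zpowers σ).subtype (Subgroup.zpowers τ).subtype))
    (hT : T = τ * σ) :
    LinearMap.ker (maninMap R σ T) ≤
      LinearMap.range (LinearMap.mulRight R (Nelt R σ)) ⊔
        LinearMap.range (LinearMap.mulRight R (Nelt R τ)) := by
  obtain ⟨c, hc, hcσ, hcT⟩ := exists_isCocycle₁_quotient_span_Nelt R hfree hT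
  obtain ⟨f, hf⟩ := hc.exists_factor_quotient_zpowers hcT
  have hlift : (MSymb.lift R f).comp (maninMap R σ T) =
      (Submodule.span (MonoidAlgebra R G) {Nelt R σ, Nelt R τ}).mkQ.restrictScalars R := by
    refine MonoidAlgebra.lhom_ext' fun g => LinearMap.ext_ring ?_
    simp [maninMap_single, MSymb.lift_sym, hf, hc g σ, hcσ, Submodule.Quotient.smul_mk_of]
  intro x hx
  have hmk := LinearMap.congr_fun hlift x
  rw [LinearMap.comp_apply, LinearMap.mem_ker.1 hx, map_zero] at hmk
  obtain ⟨a, b, rfl⟩ := Submodule.mem_span_pair.1 ((Submodule.Quotient.mk_eq_zero _).1 hmk.symm)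
  exact Submodule.add_mem_sup ⟨a, rfl⟩ ⟨b, rfl⟩

end Kernel

theorem statement9 (σ τ : G)
    (hσ : orderOf σ = 2)
    (hfree : Function.Bijective
      (Monoid.Coprod.lift (Subgroup.zpowers σ).subtype (Subgroup.zpowers τ).subtype))
    (T : G) (hT : T = τ * σ) :
    Function.Surjective (maninMap R σ T) ∧
    LinearMap.ker (maninMap R σ T) =
      LinearMap.range (LinearMap.mulRight R (Nelt R σ)) ⊔
        LinearMap.range (LinearMap.mulRight R (Nelt R τ)) :=
  ⟨maninMap_surjective R (Subgroup.closure_pair_eq_top_of_surjective_coprodLift hfree.2) hT,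
    le_antisymm (ker_maninMap_le R hfree hT)
      (sup_le (range_mulRight_Nelt_le_ker_maninMap_of_orderOf_eq_two R hσ)
        (range_mulRight_Nelt_le_ker_maninMap_of_eq_mul R hT))⟩
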